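/- Let (G,N) be a pair of finite groups, K a central subgroup of G contained in N, and T = π⁻¹(K). Then the index of [K,_cG] in K ∩ [N,_cG], multiplied by the order of M^{(c)}(G,N), divides |M^{(c)}(G/K,N/K)| · |⊗^{c+1}(K, G/K)| · |([R,_cF]·∏_{i=2}^{c+1} γ_{c+1}(T,F)_i) / [R,_cF]|. -/

import Mathlib

open Subgroup

/-- `itComm X Y c` is the `c`-fold iterated commutator subgroup
`[X,_c Y] = ⁅…⁅⁅X,Y⁆,Y⁆,…,Y⁆` (with `c` copies of `Y`); `itComm X Y 0 = X`. -/
def itComm {P : Type*} [Group P] (X Y : Subgroup P) : ℕ → Subgroup P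
  | 0 => X
  | c + 1 => ⁅itComm X Y c, Y⁆

instance itComm_normal {P : Type*} [Group P] (X Y : Subgroup P) [hX : X.Normal] [hY : Y.Normal]
    (c : ℕ) : (itComm X Y c).Normal := by
  induction c with
  | zero => exact hX
  | succ c ih => exact Subgroup.commutator_normal _ _

/-- The abelianization of a group, written additively. -/
abbrev AbOf (A : Type) [Group A] : Type := Additive (Abelianization A)

/-- Iterated tensor product `M ⊗ B ⊗ ⋯ ⊗ B` (with `c` factors `B`) of `ℤ`-modules. -/
noncomputable def iterTensor (M B : ModuleCat ℤ) : ℕ → ModuleCat ℤ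
  | 0 => M
  | c + 1 => ModuleCat.of ℤ (TensorProduct ℤ (iterTensor M B c) B)

/-- `⊗^{c+1}(A, B) = A^{ab} ⊗_ℤ B^{ab} ⊗_ℤ ⋯ ⊗_ℤ B^{ab}` with `c` factors `B^{ab}`. -/
noncomputable def tensorPair (A B : Type) [Group A] [Group B] (c : ℕ) : ModuleCat ℤ :=
  iterTensor (ModuleCat.of ℤ (AbOf A)) (ModuleCat.of ℤ (AbOf B)) c

/-- `M^{(c)}(G,N) = (R ∩ [S,_c F]) / [R,_c F]`, where `R = ker π` and `S = π⁻¹(N)`,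
relative to the free presentation `π : F ↠ G`. -/
def McPair {F G : Type} [Group F] [Group G] (π : F →* G) (N : Subgroup G) (c : ℕ) : Type :=
  (π.ker ⊓ itComm (N.comap π) ⊤ c : Subgroup F) ⧸
    (itComm π.ker ⊤ c).subgroupOf (π.ker ⊓ itComm (N.comap π) ⊤ c)

noncomputable instance {F G : Type} [Group F] [Group G] (π : F →* G) (N : Subgroup G) (c : ℕ) :
    Group (McPair π N c) :=
  inferInstanceAs (Group ((π.ker ⊓ itComm (N.comap π) ⊤ c : Subgroup F) ⧸
    (itComm π.ker ⊤ c).subgroupOf (π.ker ⊓ itComm (N.comap π) ⊤ c)))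

/-- `M^{(c)}(G/K, N/K) = (T ∩ [S,_c F]) / [T,_c F]`, where `T = π⁻¹(K)` and `S = π⁻¹(N)`,
relative to the free presentation `π : F ↠ G`. -/
def McPairQuot {F G : Type} [Group F] [Group G] (π : F →* G) (N K : Subgroup G) (c : ℕ) :
    Type :=
  (K.comap π ⊓ itComm (N.comap π) ⊤ c : Subgroup F) ⧸
    (itComm (K.comap π) ⊤ c).subgroupOf (K.comap π ⊓ itComm (N.comap π) ⊤ c)

noncomputable instance {F G : Type} [Group F] [Group G] (π : F →* G) (N K : Subgroup G)
    [K.Normal] (c : ℕ) : Group (McPairQuot π N K c) :=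
  inferInstanceAs (Group ((K.comap π ⊓ itComm (N.comap π) ⊤ c : Subgroup F) ⧸
    (itComm (K.comap π) ⊤ c).subgroupOf (K.comap π ⊓ itComm (N.comap π) ⊤ c)))

/-- `gammaMixed T c i` is the left-normed multiple commutator subgroup
`γ_{c+1}(T,F)_i = [D_1,D_2,…,D_{c+1}]` with `D_1 = D_i = T` and `D_j = F` (i.e. `⊤`)
for `j ≠ 1, i`. -/
def gammaMixed {P : Type*} [Group P] (T : Subgroup P) (c i : ℕ) : Subgroup P :=
  (List.range c).foldl (fun A j => ⁅A, if j + 2 = i then T else ⊤⁆) T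

private theorem foldl_comm_normal {P : Type*} [Group P] (T : Subgroup P) [hT : T.Normal]
    (i : ℕ) : ∀ (L : List ℕ) (A : Subgroup P), A.Normal →
      (L.foldl (fun A j => ⁅A, if j + 2 = i then T else ⊤⁆) A).Normal := by
  intro L
  induction L with
  | nil => intro A hA; exact hA
  | cons a L ih =>
      intro A hA
      apply ih
      haveI := hA
      by_cases h : a + 2 = i
      · simpa [h] using (inferInstance : (⁅A, T⁆).Normal)
      · simpa [h] using (inferInstance : (⁅A, (⊤ : Subgroup P)⁆).Normal)

instance gammaMixed_normal {P : Type*} [Group P] (T : Subgroup P) [hT : T.Normal] (c i : ℕ) :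
    (gammaMixed T c i).Normal :=
  foldl_comm_normal T i (List.range c) T hT

instance finsetSup_gammaMixed_normal {P : Type*} [Group P] (T : Subgroup P) [T.Normal]
    (c : ℕ) (s : Finset ℕ) : (s.sup (gammaMixed T c)).Normal := by
  induction s using Finset.cons_induction with
  | empty => simpa [Finset.sup_empty] using (inferInstance : (⊥ : Subgroup P).Normal)
  | cons a s ha ih =>
      rw [Finset.sup_cons]
      haveI := ih
      exact Subgroup.sup_normal _ _

/-- Minimal number of generators of a group. -/
noncomputable def dGen (X : Type*) [Group X] : ℕ :=
  sInf {n | ∃ s : Finset X, s.card = n ∧ Subgroup.closure (s : Set X) = ⊤}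

/-- Minimal number of generators of an additive group. -/
noncomputable def dGenAdd (X : Type*) [AddGroup X] : ℕ :=
  sInf {n | ∃ s : Finset X, s.card = n ∧ AddSubgroup.closure (s : Set X) = ⊤}


/-!
Write `R = ker π`, `T = π⁻¹(K)`, `S = π⁻¹(N)` and `B = [R,_c F] · ∏ γ_{c+1}(T,F)_i`. Since `K`
is central, `[T,F] ≤ R`, so `[K,_c G] = 1` and `|K ∩ [N,_c G]| = [T ∩ [S,_c F] : R ∩ [S,_c F]]`.
All the numbers in the statement are then indices in the two chains
`[R,_c F] ≤ R ∩ [S,_c F] ≤ T ∩ [S,_c F]` and `[R,_c F] ≤ B ≤ [T,_c F] ≤ T ∩ [S,_c F]`, and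
comparing them leaves `[[T,_c F] : B] ∣ |K^{ab} ⊗ (G/K)^{ab} ⊗ ⋯ ⊗ (G/K)^{ab}|`.

In `Q = F/B` the image of `T` satisfies `[T,_{c+1} Q] = 1`, `[R,_c Q] = 1` and
`γ_{c+1}(T,Q)_i = 1`. Then the left-normed commutator `[t, f_1, …, f_c]` is a homomorphism in each
argument, trivial for `t ∈ R` and for `f_i ∈ T`, and its values generate `[T,_c Q]`; so it
induces a surjection from the tensor product onto `[T,_c Q]`.
-/

open scoped commutatorElement

section Subgroups

variable {P : Type*} [Group P]

theorem itComm_succ' (X Y : Subgroup P) (n : ℕ) :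
    itComm X Y (n + 1) = itComm ⁅X, Y⁆ Y n := by
  induction n with
  | zero => rfl
  | succ n ih => exact congrArg (⁅·, Y⁆) ih

theorem itComm_add (X Y : Subgroup P) (m n : ℕ) :
    itComm X Y (m + n) = itComm (itComm X Y m) Y n := by
  induction n with
  | zero => rfl
  | succ n ih => exact congrArg (⁅·, Y⁆) ih

theorem itComm_mono {X X' : Subgroup P} (Y : Subgroup P) (h : X ≤ X') (n : ℕ) :
    itComm X Y n ≤ itComm X' Y n := by
  induction n with
  | zero => exact h
  | succ n ih => exact Subgroup.commutator_mono ih le_rfl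

theorem itComm_le_self (X : Subgroup P) [X.Normal] (n : ℕ) : itComm X ⊤ n ≤ X := by
  induction n with
  | zero => exact le_rfl
  | succ n ih => exact (Subgroup.commutator_le_left _ _).trans ih

theorem itComm_antitone (X : Subgroup P) [X.Normal] {m n : ℕ} (h : n ≤ m) :
    itComm X ⊤ m ≤ itComm X ⊤ n := by
  obtain ⟨k, rfl⟩ := Nat.exists_eq_add_of_le h
  rw [itComm_add]
  exact itComm_le_self _ k

theorem map_itComm {P' : Type*} [Group P'] {f : P →* P'} (hf : Function.Surjective f)
    (X : Subgroup P) (n : ℕ) : (itComm X ⊤ n).map f = itComm (X.map f) ⊤ n := by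
  induction n with
  | zero => rfl
  | succ n ih =>
    rw [itComm, itComm, Subgroup.map_commutator, ih, Subgroup.map_top_of_surjective f hf]

theorem map_foldl_commutator {ι P' : Type*} [Group P'] (f : P →* P') (g : ι → Subgroup P)
    (L : List ι) (X : Subgroup P) :
    (L.foldl (fun A j => ⁅A, g j⁆) X).map f =
      L.foldl (fun A j => ⁅A, (g j).map f⁆) (X.map f) := by
  induction L generalizing X with
  | nil => rfl
  | cons j L ih => rw [List.foldl_cons, List.foldl_cons, ih, Subgroup.map_commutator]

theorem foldl_commutator_le_itComm {ι : Type*} (g : ι → Subgroup P) (L : List ι)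
    (X : Subgroup P) : L.foldl (fun A j => ⁅A, g j⁆) X ≤ itComm X ⊤ L.length := by
  induction L generalizing X with
  | nil => exact le_rfl
  | cons j L ih =>
    rw [List.foldl_cons, List.length_cons, itComm_succ']
    exact (ih _).trans (itComm_mono _ (Subgroup.commutator_mono le_rfl le_top) _)

theorem gammaMixed_le_itComm (T : Subgroup P) (c i : ℕ) :
    gammaMixed T c i ≤ itComm T ⊤ c := by
  have := foldl_commutator_le_itComm (fun j => if j + 2 = i then T else ⊤) (List.range c) T
  rwa [List.length_range] at this

theorem map_gammaMixed {P' : Type*} [Group P'] {f : P →* P'} (hf : Function.Surjective f)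
    (T : Subgroup P) (c i : ℕ) : (gammaMixed T c i).map f = gammaMixed (T.map f) c i := by
  rw [gammaMixed, gammaMixed, map_foldl_commutator]
  refine List.foldl_ext _ _ _ fun A j _ => ?_
  split_ifs <;> simp [Subgroup.map_top_of_surjective f hf]

theorem Subgroup.map_comap_inf {P' : Type*} [Group P'] (f : P →* P') (K : Subgroup P')
    (H : Subgroup P) : (K.comap f ⊓ H).map f = K ⊓ H.map f := by
  ext x
  simp only [Subgroup.mem_map, Subgroup.mem_inf, Subgroup.mem_comap]
  constructor
  · rintro ⟨y, ⟨hyK, hyH⟩, rfl⟩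
    exact ⟨hyK, y, hyH, rfl⟩
  · rintro ⟨hxK, y, hyH, rfl⟩
    exact ⟨y, ⟨hxK, hyH⟩, rfl⟩

theorem card_inf_itComm_eq_relIndex {P' : Type*} [Group P'] {f : P →* P'}
    (hf : Function.Surjective f) (N K : Subgroup P') (c : ℕ) :
    Nat.card (K ⊓ itComm N ⊤ c : Subgroup P') =
      (f.ker ⊓ itComm (N.comap f) ⊤ c).relIndex (K.comap f ⊓ itComm (N.comap f) ⊤ c) := by
  rw [← inf_of_le_left (f.ker_le_comap K), inf_assoc, Subgroup.inf_relIndex_right,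
    Subgroup.relIndex_ker, Subgroup.map_comap_inf, map_itComm hf,
    Subgroup.map_comap_eq_self_of_surjective hf]

theorem commutator_comap_top_le_ker {P' : Type*} [Group P'] (f : P →* P') {K : Subgroup P'}
    (hKZ : K ≤ Subgroup.center P') : ⁅K.comap f, ⊤⁆ ≤ f.ker := by
  rw [← Subgroup.map_eq_bot_iff, Subgroup.map_commutator, eq_bot_iff,
    ← Subgroup.commutator_top_right_eq_bot_iff_le_center.mpr hKZ]
  exact Subgroup.commutator_mono (Subgroup.map_comap_le _ _) le_top

theorem itComm_eq_bot_of_le_center {K : Subgroup P} [K.Normal] (hKZ : K ≤ Subgroup.center P)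
    {c : ℕ} (hc : 1 ≤ c) : itComm K ⊤ c = ⊥ :=
  eq_bot_iff.mpr <|
    (itComm_antitone K hc).trans (Subgroup.commutator_top_right_eq_bot_iff_le_center.mpr hKZ).le

end Subgroups

theorem List.ofFn_update {α : Type*} {n : ℕ} (ys : Fin n → α) (i : Fin n) (y : α) :
    List.ofFn (Function.update ys i y) =
      (List.ofFn ys).take i ++ y :: (List.ofFn ys).drop (i + 1) := by
  simp [List.ofFn_eq_map, (List.nodup_finRange n).map_update, List.set_eq_take_append_cons_drop]

section IteratedCommutatorElements

variable {P : Type*} [Group P]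

def iterCommElt (x : P) (l : List P) : P :=
  l.foldl (fun a f => ⁅a, f⁆) x

theorem iterCommElt_cons (x f : P) (l : List P) :
    iterCommElt x (f :: l) = iterCommElt ⁅x, f⁆ l := rfl

theorem iterCommElt_append (x : P) (l₁ l₂ : List P) :
    iterCommElt x (l₁ ++ l₂) = iterCommElt (iterCommElt x l₁) l₂ :=
  List.foldl_append

theorem commutatorElement_mem_itComm_succ {X : Subgroup P} {n : ℕ} {x : P}
    (hx : x ∈ itComm X ⊤ n) (g : P) : ⁅x, g⁆ ∈ itComm X ⊤ (n + 1) :=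
  Subgroup.commutator_mem_commutator hx (Subgroup.mem_top g)

theorem commutatorElement_mem_itComm_succ' {X : Subgroup P} {n : ℕ} {x : P}
    (hx : x ∈ itComm X ⊤ n) (g : P) : ⁅g, x⁆ ∈ itComm X ⊤ (n + 1) := by
  rw [itComm, Subgroup.commutator_comm]
  exact Subgroup.commutator_mem_commutator (Subgroup.mem_top g) hx

theorem iterCommElt_mem_itComm {X : Subgroup P} {j : ℕ} {x : P} (hx : x ∈ itComm X ⊤ j)
    (l : List P) : iterCommElt x l ∈ itComm X ⊤ (j + l.length) := by
  induction l generalizing j x with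
  | nil => exact hx
  | cons f l ih =>
    rw [iterCommElt_cons, List.length_cons, ← Nat.add_assoc, Nat.add_right_comm]
    exact ih (commutatorElement_mem_itComm_succ hx f)

theorem iterCommElt_mem_itComm_length {X : Subgroup P} {x : P} (hx : x ∈ X) (l : List P) :
    iterCommElt x l ∈ itComm X ⊤ l.length := by
  simpa using iterCommElt_mem_itComm (j := 0) hx l

theorem iterCommElt_mem_foldl {ι : Type*} (g : ι → Subgroup P) {X : Subgroup P} {x : P}
    (hx : x ∈ X) {l : List P} {L : List ι} (h : List.Forall₂ (fun y j => y ∈ g j) l L) :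
    iterCommElt x l ∈ L.foldl (fun A j => ⁅A, g j⁆) X := by
  induction h generalizing x X with
  | nil => exact hx
  | cons hy _ ih => exact ih (Subgroup.commutator_mem_commutator hx hy)

theorem iterCommElt_mem_gammaMixed {T : Subgroup P} {t s : P} (ht : t ∈ T) (hs : s ∈ T)
    {l₁ l₂ : List P} {c : ℕ} (hc : l₁.length + 1 + l₂.length = c) :
    iterCommElt t (l₁ ++ s :: l₂) ∈ gammaMixed T c (l₁.length + 2) := by
  refine iterCommElt_mem_foldl _ ht (List.forall₂_iff_get.mpr ⟨by simp; omega, ?_⟩)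
  intro k h₁ h₂
  simp only [List.get_eq_getElem, List.getElem_range]
  split_ifs with hk
  · obtain rfl : k = l₁.length := by omega
    simpa using hs
  · exact Subgroup.mem_top _

theorem iterCommElt_ofFn_update_mem_gammaMixed {T : Subgroup P} {t s : P} (ht : t ∈ T)
    (hs : s ∈ T) {c : ℕ} (ys : Fin c → P) (i : Fin c) :
    iterCommElt t (List.ofFn (Function.update ys i s)) ∈ gammaMixed T c (i + 2) := by
  have h := iterCommElt_mem_gammaMixed ht hs (l₁ := (List.ofFn ys).take i)
    (l₂ := (List.ofFn ys).drop (i + 1)) (c := c) (by simp)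
  rwa [List.length_take, List.length_ofFn, min_eq_left i.2.le, ← List.ofFn_update] at h

end IteratedCommutatorElements

section Multilinearity

variable {P : Type*} [Group P] {T : Subgroup P} {c : ℕ}

theorem commute_of_mem_itComm (hT : itComm T ⊤ (c + 1) = ⊥) {a : P} (ha : a ∈ itComm T ⊤ c)
    (b : P) : Commute a b := by
  have h := commutatorElement_mem_itComm_succ ha b
  rwa [hT, Subgroup.mem_bot, commutatorElement_eq_one_iff_commute] at h

variable [T.Normal]

theorem iterCommElt_eq_one (hT : itComm T ⊤ (c + 1) = ⊥) {j : ℕ} {x : P}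
    (hx : x ∈ itComm T ⊤ j) {l : List P} (hl : c + 1 ≤ j + l.length) :
    iterCommElt x l = 1 := by
  have h := itComm_antitone T hl (iterCommElt_mem_itComm hx l)
  rwa [hT, Subgroup.mem_bot] at h

theorem iterCommElt_mul (hT : itComm T ⊤ (c + 1) = ⊥) (l : List P) {j : ℕ} {x y : P}
    (hl : j + l.length = c) (hx : x ∈ itComm T ⊤ j) (hy : y ∈ itComm T ⊤ j) :
    iterCommElt (x * y) l = iterCommElt x l * iterCommElt y l := by
  induction l generalizing j x y with
  | nil => rfl
  | cons f l ih =>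
    have hl' : j + 1 + l.length = c := by simp only [List.length_cons] at hl; omega
    have hxf := commutatorElement_mem_itComm_succ hx f
    have hyf := commutatorElement_mem_itComm_succ hy f
    have hxyf := commutatorElement_mem_itComm_succ' hyf x
    -- the first factor lies one level deeper than the others, so it dies under `l`
    have hexpand : ⁅x * y, f⁆ = ⁅x, ⁅y, f⁆⁆ * (⁅y, f⁆ * ⁅x, f⁆) := by
      simp only [commutatorElement_def]; group
    rw [iterCommElt_cons, iterCommElt_cons, iterCommElt_cons, hexpand,
      ih hl' (itComm_antitone T (Nat.le_succ _) hxyf) (mul_mem hyf hxf), ih hl' hyf hxf,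
      iterCommElt_eq_one hT hxyf (by omega), one_mul]
    exact (commute_of_mem_itComm hT (hl' ▸ iterCommElt_mem_itComm hyf l) _).eq

theorem iterCommElt_cons_mul (hT : itComm T ⊤ (c + 1) = ⊥) {j : ℕ} {x : P}
    (hx : x ∈ itComm T ⊤ j) (f f' : P) {l : List P} (hl : j + 1 + l.length = c) :
    iterCommElt x ((f * f') :: l) = iterCommElt x (f :: l) * iterCommElt x (f' :: l) := by
  have hxf := commutatorElement_mem_itComm_succ hx f
  have hxf' := commutatorElement_mem_itComm_succ hx f'
  have he := commutatorElement_mem_itComm_succ' hxf' f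
  have hexpand : ⁅x, f * f'⁆ = ⁅x, f⁆ * (⁅f, ⁅x, f'⁆⁆ * ⁅x, f'⁆) := by
    simp only [commutatorElement_def]; group
  rw [iterCommElt_cons, iterCommElt_cons, iterCommElt_cons, hexpand,
    iterCommElt_mul hT l hl hxf (mul_mem (itComm_antitone T (Nat.le_succ _) he) hxf'),
    iterCommElt_mul hT l hl (itComm_antitone T (Nat.le_succ _) he) hxf',
    iterCommElt_eq_one hT he (by omega), one_mul]

theorem iterCommElt_ofFn_update_mul (hT : itComm T ⊤ (c + 1) = ⊥) {x : P} (hx : x ∈ T)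
    (ys : Fin c → P) (i : Fin c) (y y' : P) :
    iterCommElt x (List.ofFn (Function.update ys i (y * y'))) =
      iterCommElt x (List.ofFn (Function.update ys i y)) *
        iterCommElt x (List.ofFn (Function.update ys i y')) := by
  simp only [List.ofFn_update, iterCommElt_append]
  exact iterCommElt_cons_mul hT (iterCommElt_mem_itComm_length hx _) y y' (by simp)

theorem itComm_le_closure_iterCommElt (hT : itComm T ⊤ (c + 1) = ⊥) :
    itComm T ⊤ c ≤
      Subgroup.closure {v | ∃ t ∈ T, ∃ l : List P, l.length = c ∧ iterCommElt t l = v} := by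
  set S := {v | ∃ t ∈ T, ∃ l : List P, l.length = c ∧ iterCommElt t l = v}
  suffices h : ∀ j, ∀ x ∈ itComm T ⊤ j, ∀ l : List P, j + l.length = c →
      iterCommElt x l ∈ Subgroup.closure S from
    fun x hx => h c x hx [] rfl
  intro j
  induction j with
  | zero => exact fun x hx l hl => Subgroup.subset_closure ⟨x, hx, l, by omega, rfl⟩
  | succ j ih =>
    intro x hx l hl
    let φ : itComm T ⊤ (j + 1) →* P :=
      MonoidHom.mk' (fun x => iterCommElt x l) fun x y => iterCommElt_mul hT l hl x.2 y.2
    have hle : itComm T ⊤ (j + 1) ≤ ((Subgroup.closure S).comap φ).map (Subgroup.subtype _) := by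
      refine Subgroup.commutator_le.mpr fun a ha b _ => ?_
      exact ⟨⟨⁅a, b⁆, commutatorElement_mem_itComm_succ ha b⟩,
        ih a ha (b :: l) (by simp only [List.length_cons]; omega), rfl⟩
    obtain ⟨y, hy, rfl⟩ := hle hx
    exact hy

end Multilinearity

section TensorLift

noncomputable def iterTmul (M B : ModuleCat ℤ) : ∀ c, M → (Fin c → B) → iterTensor M B c
  | 0, x, _ => x
  | c + 1, x, bs => iterTmul M B c x (Fin.init bs) ⊗ₜ[ℤ] bs (Fin.last c)

variable {X W : Type*} [Group X] {A : Type} [Group A] [AddCommGroup W] {p : X →* A}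

noncomputable def abOfLift (hp : Function.Surjective p) (f : X → W)
    (hf : ∀ x x', f (x * x') = f x + f x') (hker : ∀ x, p x = 1 → f x = 0) : AbOf A →+ W :=
  MonoidHom.toAdditiveLeft <| Abelianization.lift <|
    p.liftOfSurjective hp ⟨MonoidHom.mk' (fun x => Multiplicative.ofAdd (f x)) hf, hker⟩

@[simp] theorem abOfLift_apply (hp : Function.Surjective p) (f : X → W)
    (hf : ∀ x x', f (x * x') = f x + f x') (hker : ∀ x, p x = 1 → f x = 0) (x : X) :
    abOfLift hp f hf hker (Additive.ofMul (Abelianization.of (p x))) = f x := by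
  simp only [abOfLift, MonoidHom.liftOfSurjective, MonoidHom.toAdditiveLeft_apply_apply,
    toMul_ofMul, Abelianization.lift_apply_of, MonoidHom.liftOfRightInverse_comp_apply]
  rfl

theorem abOf_hom_ext (hp : Function.Surjective p) {φ ψ : AbOf A →+ W}
    (h : ∀ x, φ (Additive.ofMul (Abelianization.of (p x))) =
      ψ (Additive.ofMul (Abelianization.of (p x)))) : φ = ψ := by
  ext a
  obtain ⟨x, rfl⟩ := hp a
  exact h x

theorem exists_tensorPair_lift {Y : Type*} [Group Y] {B : Type} [Group B]
    (hp : Function.Surjective p) {q : Y →* B} (hq : Function.Surjective q) (c : ℕ)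
    (ν : X → (Fin c → Y) → W)
    (hmul : ∀ x x' ys, ν (x * x') ys = ν x ys + ν x' ys)
    (hslot : ∀ x ys i y y', ν x (Function.update ys i (y * y')) =
      ν x (Function.update ys i y) + ν x (Function.update ys i y'))
    (hker : ∀ x ys, p x = 1 → ν x ys = 0)
    (hslotker : ∀ x ys i y, q y = 1 → ν x (Function.update ys i y) = 0) :
    ∃ Φ : tensorPair A B c →+ W, ∀ x ys,
      Φ (iterTmul _ _ c (Additive.ofMul (Abelianization.of (p x)))
        fun i => Additive.ofMul (Abelianization.of (q (ys i)))) = ν x ys := by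
  induction c generalizing W with
  | zero =>
    refine ⟨abOfLift hp (fun x => ν x finZeroElim) (fun x x' => hmul x x' _)
      (fun x hx => hker x _ hx), fun x ys => ?_⟩
    rw [Subsingleton.elim ys finZeroElim]
    exact abOfLift_apply _ _ _ _ x
  | succ c ih =>
    have hlast : ∀ (ys : Fin c → Y) (y : Y), Function.update (Fin.snoc ys 1) (Fin.last c) y =
        Fin.snoc (α := fun _ => Y) ys y := fun ys y => Fin.update_snoc_last _ _ _
    let ν' : X → (Fin c → Y) → (AbOf B →+ W) := fun x ys =>
      abOfLift hq (fun y => ν x (Fin.snoc ys y))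
        (fun y y' => by simpa only [hlast] using hslot x (Fin.snoc ys 1) (Fin.last c) y y')
        (fun y hy => by simpa only [hlast] using hslotker x (Fin.snoc ys 1) (Fin.last c) y hy)
    obtain ⟨Ψ, hΨ⟩ := ih ν'
      (fun x x' ys => abOf_hom_ext hq fun y => by simp [ν', hmul])
      (fun x ys i y y' => abOf_hom_ext hq fun y₀ => by simp [ν', Fin.snoc_update, hslot])
      (fun x ys hx => abOf_hom_ext hq fun y => by simp [ν', hker x _ hx])
      (fun x ys i y hy => abOf_hom_ext hq fun y₀ => by
        simp [ν', Fin.snoc_update, hslotker _ _ _ _ hy])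
    -- `liftAddHom` asks for the module action of `ℤ`, which is `zsmul` only propositionally
    have hcompat : ∀ (r : ℤ) m b, Ψ (r • m) b = Ψ m (r • b) := fun r m b => by
      rw [map_zsmul, AddMonoidHom.zsmul_apply, map_zsmul]
    refine ⟨TensorProduct.liftAddHom Ψ fun r m b => ?_, fun x ys => ?_⟩
    · convert hcompat r m b using 2
      · exact congrArg Ψ (int_smul_eq_zsmul _ r m)
      · rfl
    · have h := DFunLike.congr_fun (hΨ x (Fin.init ys))
        (Additive.ofMul (Abelianization.of (q (ys (Fin.last c)))))
      simp only [ν', abOfLift_apply, Fin.snoc_init_self] at h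
      exact h

end TensorLift

theorem card_itComm_comap_dvd_card_tensorPair {Q : Type*} [Group Q] {G : Type} [Group G]
    {σ : Q →* G} (hσ : Function.Surjective σ) (K : Subgroup G) [K.Normal] (c : ℕ)
    (hR : itComm σ.ker ⊤ c = ⊥) (hT : itComm (K.comap σ) ⊤ (c + 1) = ⊥)
    (hγ : ∀ i ∈ Finset.Icc 2 (c + 1), gammaMixed (K.comap σ) c i = ⊥) :
    Nat.card (itComm (K.comap σ) ⊤ c) ∣ Nat.card (tensorPair K (G ⧸ K) c) := by
  set T := K.comap σ
  set W := itComm T ⊤ c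
  let _ : CommGroup W := { mul_comm := fun a b => Subtype.ext (commute_of_mem_itComm hT a.2 b).eq }
  have hmem : ∀ (t : T) (l : List Q), l.length = c → iterCommElt (t : Q) l ∈ W := by
    rintro t l rfl
    exact iterCommElt_mem_itComm_length t.2 l
  let ν : T → (Fin c → Q) → Additive W := fun t ys =>
    Additive.ofMul ⟨iterCommElt t (List.ofFn ys), hmem t _ (List.length_ofFn)⟩
  obtain ⟨Φ, hΦ⟩ := exists_tensorPair_lift (σ.subgroupComap_surjective_of_surjective K hσ)
    (q := (QuotientGroup.mk' K).comp σ) ((QuotientGroup.mk'_surjective K).comp hσ) c ν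
    (fun t t' ys => congrArg Additive.ofMul <| Subtype.ext <|
      iterCommElt_mul hT _ (j := 0) (by simp) t.2 t'.2)
    (fun t ys i y y' => congrArg Additive.ofMul <| Subtype.ext <|
      iterCommElt_ofFn_update_mul hT t.2 ys i y y')
    (fun t ys ht => congrArg Additive.ofMul <| Subtype.ext <| by
      have h := iterCommElt_mem_itComm_length (X := σ.ker) (congrArg Subtype.val ht) (List.ofFn ys)
      rwa [List.length_ofFn, hR, Subgroup.mem_bot] at h)
    (fun t ys i y hy => congrArg Additive.ofMul <| Subtype.ext <| by
      have h := iterCommElt_ofFn_update_mem_gammaMixed t.2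
        ((QuotientGroup.eq_one_iff (σ y)).mp hy) ys i
      rwa [hγ _ (by simp), Subgroup.mem_bot] at h)
  have hclosure :
      Subgroup.closure {v | ∃ t ∈ T, ∃ l : List Q, l.length = c ∧ iterCommElt t l = v} ≤
        (Subgroup.toAddSubgroup.symm Φ.range).map W.subtype := by
    rw [Subgroup.closure_le]
    rintro _ ⟨t, ht, l, rfl, rfl⟩
    refine ⟨⟨_, hmem ⟨t, ht⟩ l rfl⟩, ⟨_, (hΦ ⟨t, ht⟩ l.get).trans ?_⟩, rfl⟩
    simp only [ν, List.ofFn_get]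
    rfl
  have hsurj : Function.Surjective Φ := by
    intro w
    obtain ⟨v, hv, hvw⟩ := hclosure (itComm_le_closure_iterCommElt hT w.toMul.2)
    obtain rfl : v = w.toMul := Subtype.ext hvw
    exact hv
  simpa [Nat.card_congr Additive.toMul] using AddSubgroup.card_dvd_of_surjective Φ hsurj

theorem relIndex_itComm_comap_dvd_card_tensorPair {F : Type*} [Group F] {G : Type} [Group G]
    (π : F →* G) (hπ : Function.Surjective π)
    (K : Subgroup G) [K.Normal] (hKZ : K ≤ Subgroup.center G) (c : ℕ) :
    (itComm π.ker ⊤ c ⊔ (Finset.Icc 2 (c + 1)).sup (gammaMixed (K.comap π) c)).relIndex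
      (itComm (K.comap π) ⊤ c) ∣ Nat.card (tensorPair K (G ⧸ K) c) := by
  set T := K.comap π
  set B := itComm π.ker ⊤ c ⊔ (Finset.Icc 2 (c + 1)).sup (gammaMixed T c)
  have hTR := commutator_comap_top_le_ker π hKZ
  have hγR : ∀ i ∈ Finset.Icc 2 (c + 1), gammaMixed T c i ≤ π.ker := fun i hi =>
    (gammaMixed_le_itComm T c i).trans <|
      (itComm_antitone T (by simp at hi; omega : 1 ≤ c)).trans hTR
  have hBR : B ≤ π.ker := sup_le (itComm_le_self _ c) (Finset.sup_le hγR)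
  set q := QuotientGroup.mk' B
  have hq : Function.Surjective q := QuotientGroup.mk'_surjective B
  set σ := QuotientGroup.lift B π hBR
  have hσ : Function.Surjective σ := QuotientGroup.lift_surjective_of_surjective B π hπ hBR
  have hTσ : K.comap σ = T.map q := by
    have hT : (K.comap σ).comap q = T := by
      rw [Subgroup.comap_comap, QuotientGroup.lift_comp_mk']
    exact (Subgroup.map_comap_eq_self_of_surjective hq _).symm.trans (congrArg _ hT)
  have hmap_eq_bot : ∀ H : Subgroup F, H ≤ B → H.map q = ⊥ := fun H hH => by
    rwa [Subgroup.map_eq_bot_iff, QuotientGroup.ker_mk']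
  have hcore := card_itComm_comap_dvd_card_tensorPair hσ K c
    (by rw [QuotientGroup.ker_lift, ← map_itComm hq]; exact hmap_eq_bot _ le_sup_left)
    (by
      rw [hTσ, ← map_itComm hq]
      refine hmap_eq_bot _ (le_sup_of_le_left ?_)
      rw [itComm_succ']
      exact itComm_mono _ hTR c)
    (fun i hi => by
      rw [hTσ, ← map_gammaMixed hq]
      exact hmap_eq_bot _ (le_sup_of_le_right (Finset.le_sup hi)))
  rwa [hTσ, ← map_itComm hq, ← Subgroup.relIndex_ker, QuotientGroup.ker_mk'] at hcore

theorem card_multiplier_dvd_of_central_general {G : Type} [Group G]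
    {F : Type} [Group F] (π : F →* G) (hπ : Function.Surjective π)
    (N K : Subgroup G) [K.Normal] (hKN : K ≤ N) (hKZ : K ≤ Subgroup.center G)
    (c : ℕ) (hc : 1 ≤ c) :
    (itComm K ⊤ c).relIndex (K ⊓ itComm N ⊤ c) * Nat.card (McPair π N c) ∣
      Nat.card (McPairQuot π N K c) * Nat.card (tensorPair K (G ⧸ K) c) *
        Nat.card
          ((itComm π.ker ⊤ c ⊔ (Finset.Icc 2 (c+1)).sup (gammaMixed (K.comap π) c) :
              Subgroup F) ⧸
            (itComm π.ker ⊤ c).subgroupOf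
              (itComm π.ker ⊤ c ⊔ (Finset.Icc 2 (c+1)).sup (gammaMixed (K.comap π) c))) := by
  rw [itComm_eq_bot_of_le_center hKZ hc, Subgroup.relIndex_bot_left,
    card_inf_itComm_eq_relIndex hπ, McPair, McPairQuot, ← Subgroup.index_eq_card,
    ← Subgroup.index_eq_card, ← Subgroup.index_eq_card]
  set T := K.comap π
  set S := N.comap π
  set D := itComm π.ker ⊤ c
  set B := D ⊔ (Finset.Icc 2 (c + 1)).sup (gammaMixed T c)
  set C := itComm T ⊤ c
  set A := π.ker ⊓ itComm S ⊤ c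
  set A' := T ⊓ itComm S ⊤ c
  change A.relIndex A' * D.relIndex A ∣ C.relIndex A' * _ * D.relIndex B
  have hRT : π.ker ≤ T := π.ker_le_comap K
  have hTS : T ≤ S := Subgroup.comap_mono hKN
  have hDB : D ≤ B := le_sup_left
  have hBC : B ≤ C :=
    sup_le (itComm_mono _ hRT c) (Finset.sup_le fun i _ => gammaMixed_le_itComm T c i)
  have hCA' : C ≤ A' := le_inf (itComm_le_self _ c) (itComm_mono _ hTS c)
  rw [mul_comm (A.relIndex A'), Subgroup.relIndex_mul_relIndex _ _ _
      (le_inf (itComm_le_self _ c) (itComm_mono _ (hRT.trans hTS) c)) (inf_le_inf_right _ hRT),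
    ← Subgroup.relIndex_mul_relIndex _ _ _ (hDB.trans hBC) hCA',
    ← Subgroup.relIndex_mul_relIndex _ _ _ hDB hBC]
  calc D.relIndex B * B.relIndex C * C.relIndex A'
      = C.relIndex A' * B.relIndex C * D.relIndex B := by ring
    _ ∣ _ := mul_dvd_mul_right
      (mul_dvd_mul_left _ (relIndex_itComm_comap_dvd_card_tensorPair π hπ K hKZ c)) _

/-- Let `(G,N)` be a pair of finite groups, `K` a central subgroup of `G` contained in `N`,
`π : F ↠ G` a free presentation with kernel `R`, and `T = π⁻¹(K)`.  Then
`[K ∩ [N,_c G] : [K,_c G]] · |M^{(c)}(G,N)|` divides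
`|M^{(c)}(G/K,N/K)| · |⊗^{c+1}(K, G/K)| · |([R,_c F]·∏_{i=2}^{c+1} γ_{c+1}(T,F)_i)/[R,_c F]|`. -/
theorem card_multiplier_dvd_of_central {G : Type} [Group G] [Finite G]
    {F : Type} [Group F] [IsFreeGroup F] (π : F →* G) (hπ : Function.Surjective π)
    (N K : Subgroup G) [N.Normal] [K.Normal] (hKN : K ≤ N) (hKZ : K ≤ Subgroup.center G)
    (c : ℕ) (hc : 1 ≤ c) :
    (itComm K ⊤ c).relIndex (K ⊓ itComm N ⊤ c) * Nat.card (McPair π N c) ∣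
      Nat.card (McPairQuot π N K c) * Nat.card (tensorPair K (G ⧸ K) c) *
        Nat.card
          ((itComm π.ker ⊤ c ⊔ (Finset.Icc 2 (c+1)).sup (gammaMixed (K.comap π) c) :
              Subgroup F) ⧸
            (itComm π.ker ⊤ c).subgroupOf
              (itComm π.ker ⊤ c ⊔ (Finset.Icc 2 (c+1)).sup (gammaMixed (K.comap π) c))) :=
  card_multiplier_dvd_of_central_general π hπ N K hKN hKZ c hc
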